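/- Let (x_i, y_i), i = 1,…,n, be i.i.d. from D, ι > 0, w fixed, θ ∈ (1,2), and ψ satisfy ψ(t) ≥ -log(1 - t + t^θ/θ) for t ≥ 0. Then E[exp(-Σ_{i=1}^n ψ(ι|y_i - ⟨x_i, w⟩|))] ≤ exp(n(-ι L(w) + (ι^θ/θ) E|y - ⟨x, w⟩|^θ)). -/

import Mathlib

open MeasureTheory
open scoped RealInnerProductSpace

/-! The hypothesis on `ψ` gives `exp (-ψ t) ≤ 1 - t + t ^ θ / θ` for `t ≥ 0`, the right side
being positive by Bernoulli's inequality. With `Z = |y - ⟪x, w⟫|`, independence of the sample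
bounds the expectation of `∏ i, exp (-ψ (ι Zᵢ))` by the `n`-th power of
`E (1 - ι Z + ι ^ θ Z ^ θ / θ) = 1 + a`, and `(1 + a) ^ n ≤ exp (n a)`. -/

lemma one_sub_add_rpow_div_pos {θ t : ℝ} (hθ : 1 ≤ θ) (ht : 0 ≤ t) :
    0 < 1 - t + t ^ θ / θ := by
  have hθ0 : 0 < θ := by linarith
  have hbern : 1 + θ * (t - 1) ≤ t ^ θ := by
    simpa using one_add_mul_self_le_rpow_one_add (by linarith : -1 ≤ t - 1) hθ
  have : 1 / θ + t - 1 ≤ t ^ θ / θ := by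
    rw [le_div_iff₀ hθ0]
    linarith [show (1 / θ + t - 1) * θ = 1 + θ * (t - 1) by field_simp; ring]
  linarith [one_div_pos.2 hθ0]

lemma exp_neg_le_one_sub_add_rpow_div {θ t s : ℝ} (hθ : 1 ≤ θ) (ht : 0 ≤ t)
    (hs : -Real.log (1 - t + t ^ θ / θ) ≤ s) :
    Real.exp (-s) ≤ 1 - t + t ^ θ / θ :=
  (Real.le_log_iff_exp_le (one_sub_add_rpow_div_pos hθ ht)).1 (by linarith)

lemma one_add_pow_le_exp_mul {a : ℝ} (n : ℕ) (ha : 0 ≤ 1 + a) :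
    (1 + a) ^ n ≤ Real.exp (n * a) := by
  rw [Real.exp_nat_mul]
  exact pow_le_pow_left₀ ha (by linarith [Real.add_one_le_exp a]) n

theorem integral_pi_prod_le_pow {ι Ω : Type*} [Fintype ι] [MeasurableSpace Ω] {μ : Measure Ω}
    [SigmaFinite μ] {f g : Ω → ℝ} (hf : ∀ x, 0 ≤ f x) (hfg : ∀ x, f x ≤ g x)
    (hg : Integrable g μ) :
    ∫ x : ι → Ω, ∏ i, f (x i) ∂Measure.pi (fun _ => μ) ≤
      (∫ x, g x ∂μ) ^ Fintype.card ι := by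
  rw [← integral_fintype_prod_eq_pow]
  refine integral_mono_of_nonneg (.of_forall fun x => ?_)
    (Integrable.fintype_prod (f := fun _ => g) fun _ => hg) (.of_forall fun x => ?_)
  · exact Finset.prod_nonneg fun i _ => hf _
  · exact Finset.prod_le_prod (fun i _ => hf _) fun i _ => hfg _

theorem stmt_12_general {d n : ℕ} {Ω : Type*} [MeasurableSpace Ω] (μ : Measure Ω)
    [IsProbabilityMeasure μ] (X : Ω → EuclideanSpace ℝ (Fin d)) (Y : Ω → ℝ)
    (w : EuclideanSpace ℝ (Fin d)) (ι θ : ℝ) (hι : 0 < ι)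
    (hθ1 : 1 < θ) (ψ : ℝ → ℝ)
    (hψ : ∀ t : ℝ, 0 ≤ t → -Real.log (1 - t + t ^ θ / θ) ≤ ψ t)
    (hL : Integrable (fun ω => |Y ω - ⟪X ω, w⟫|) μ)
    (hθint : Integrable (fun ω => |Y ω - ⟪X ω, w⟫| ^ θ) μ) :
    (∫ ω : Fin n → Ω, Real.exp (-∑ i, ψ (ι * |Y (ω i) - ⟪X (ω i), w⟫|))
        ∂(Measure.pi fun _ => μ)) ≤
      Real.exp (n * (-(ι * ∫ ω, |Y ω - ⟪X ω, w⟫| ∂μ) +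
        ι ^ θ / θ * ∫ ω, |Y ω - ⟪X ω, w⟫| ^ θ ∂μ)) := by
  set Z : Ω → ℝ := fun ω => |Y ω - ⟪X ω, w⟫|
  set g : Ω → ℝ := fun ω => 1 - ι * Z ω + ι ^ θ / θ * Z ω ^ θ
  have hιZ (ω : Ω) : 0 ≤ ι * Z ω := mul_nonneg hι.le (abs_nonneg _)
  have hbound (ω : Ω) : Real.exp (-ψ (ι * Z ω)) ≤ g ω := by
    have h := exp_neg_le_one_sub_add_rpow_div hθ1.le (hιZ ω) (hψ _ (hιZ ω))
    rwa [Real.mul_rpow hι.le (abs_nonneg _), mul_div_right_comm] at h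
  have hlin : Integrable (fun ω => 1 - ι * Z ω) μ := (integrable_const 1).sub (hL.const_mul ι)
  have hpow : Integrable (fun ω => ι ^ θ / θ * Z ω ^ θ) μ := hθint.const_mul _
  have hmean : ∫ ω, g ω ∂μ =
      1 + (-(ι * ∫ ω, Z ω ∂μ) + ι ^ θ / θ * ∫ ω, Z ω ^ θ ∂μ) := by
    rw [integral_add hlin hpow, integral_sub (integrable_const 1) (hL.const_mul ι),
      integral_const_mul, integral_const_mul]
    simp only [integral_const, probReal_univ, smul_eq_mul, mul_one]
    ring
  calc (∫ ω : Fin n → Ω, Real.exp (-∑ i, ψ (ι * Z (ω i))) ∂Measure.pi fun _ => μ)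
      = ∫ ω : Fin n → Ω, ∏ i, Real.exp (-ψ (ι * Z (ω i))) ∂Measure.pi fun _ => μ := by
        simp only [← Finset.sum_neg_distrib, Real.exp_sum]
    _ ≤ (∫ ω, g ω ∂μ) ^ n := by
        simpa using integral_pi_prod_le_pow (ι := Fin n) (fun _ => (Real.exp_pos _).le) hbound
          (hlin.add hpow)
    _ ≤ _ := by
        rw [hmean]
        refine one_add_pow_le_exp_mul n (hmean ▸ integral_nonneg fun ω => ?_)
        exact (Real.exp_pos _).le.trans (hbound ω)

/-- MGF bound for minus the truncated empirical risk (θ-th moment case). -/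
theorem stmt_12 {d n : ℕ} {Ω : Type*} [MeasurableSpace Ω] (μ : Measure Ω)
    [IsProbabilityMeasure μ] (X : Ω → EuclideanSpace ℝ (Fin d)) (Y : Ω → ℝ)
    (hXm : Measurable X) (hYm : Measurable Y)
    (w : EuclideanSpace ℝ (Fin d)) (ι θ : ℝ) (hι : 0 < ι)
    (hθ1 : 1 < θ) (hθ2 : θ < 2) (ψ : ℝ → ℝ)
    (hψ : ∀ t : ℝ, 0 ≤ t → -Real.log (1 - t + t ^ θ / θ) ≤ ψ t)
    (hL : Integrable (fun ω => |Y ω - ⟪X ω, w⟫|) μ)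
    (hθint : Integrable (fun ω => |Y ω - ⟪X ω, w⟫| ^ θ) μ) :
    (∫ ω : Fin n → Ω, Real.exp (-∑ i, ψ (ι * |Y (ω i) - ⟪X (ω i), w⟫|))
        ∂(Measure.pi fun _ => μ)) ≤
      Real.exp (n * (-(ι * ∫ ω, |Y ω - ⟪X ω, w⟫| ∂μ) +
        ι ^ θ / θ * ∫ ω, |Y ω - ⟪X ω, w⟫| ^ θ ∂μ)) :=
  stmt_12_general μ X Y w ι θ hι hθ1 ψ hψ hL hθint
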